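/- arXiv:1711.04918 — 3 statements merged into one kernel-verified Lean document; each statement's English description precedes it below -/
import Mathlib

section
/- Let 0 < p < ∞ and f ∈ L^p(ℝ^n). For every ε > 0 there exists a function Q in the class 𝒜 such that ∫_{ℝ^n} |Q(x) − f(x)|^p dx < ε; that is, 𝒜 ∩ L^p(ℝ^n) is dense in L^p(ℝ^n) with respect to the metric d(f,g) = ∫ |f−g|^p dx when p ≤ 1 (equivalently, with respect to the L^p norm when p ≥ 1). -/
open MeasureTheory Complex Filter
open scoped ENNReal NNReal Topology

noncomputable section

/-- The point of `ℂ^n` with real part `x` and imaginary part `y`. -/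
def cpt (n : ℕ) (x y : Fin n → ℝ) : Fin n → ℂ := fun j => (x j : ℂ) + (y j : ℂ) * Complex.I

/-- The canonical embedding of `ℝ^n` into `ℂ^n`. -/
def rpt (n : ℕ) (x : Fin n → ℝ) : Fin n → ℂ := fun j => (x j : ℂ)

/-- The tube over a base `B ⊆ ℝ^n`. -/
def tube (n : ℕ) (B : Set (Fin n → ℝ)) : Set (Fin n → ℂ) :=
  {z | (fun j => (z j).im) ∈ B}

/-- The real sign attached to a boolean. -/
def sgnv (b : Bool) : ℝ := if b then 1 else -1

/-- The open octant of `ℝ^n` determined by a sign vector `σ`. -/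
def octant (n : ℕ) (σ : Fin n → Bool) : Set (Fin n → ℝ) :=
  {y | ∀ j, 0 < sgnv (σ j) * y j}

/-- The first octant `(0,∞)^n`. -/
def firstOct (n : ℕ) : Set (Fin n → ℝ) := {y | ∀ j, 0 < y j}

/-- The `p`-th power Hardy quasinorm `sup_{y ∈ B} ∫_{ℝ^n} |F(x+iy)|^p dx`. -/
def hNorm (n : ℕ) (p : ℝ) (B : Set (Fin n → ℝ)) (F : (Fin n → ℂ) → ℂ) : ℝ≥0∞ :=
  ⨆ y ∈ B, ∫⁻ x : Fin n → ℝ, (‖F (cpt n x y)‖₊ : ℝ≥0∞) ^ p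

/-- Membership in the Hardy space `H^p(T_B)`. -/
def MemHp (n : ℕ) (p : ℝ) (B : Set (Fin n → ℝ)) (F : (Fin n → ℂ) → ℂ) : Prop :=
  DifferentiableOn ℂ F (tube n B) ∧ hNorm n p B F < ⊤

/-- The `p`-th power `L^p` quasinorm `∫_{ℝ^n} |f|^p dx`. -/
def lpNorm (n : ℕ) (p : ℝ) (f : (Fin n → ℝ) → ℂ) : ℝ≥0∞ :=
  ∫⁻ x : Fin n → ℝ, (‖f x‖₊ : ℝ≥0∞) ^ p

/-- Membership in `L^p(ℝ^n)` (for `0 < p`, as a quasinormed space). -/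
def MemLp' (n : ℕ) (p : ℝ) (f : (Fin n → ℝ) → ℂ) : Prop :=
  AEMeasurable f volume ∧ lpNorm n p f < ⊤

/-- `F` has non-tangential boundary limit `L` at `x₀ ∈ ℝ^n`, within the tube over the
octant determined by `σ`. -/
def NTBLAt (n : ℕ) (σ : Fin n → Bool) (F : (Fin n → ℂ) → ℂ) (x₀ : Fin n → ℝ) (L : ℂ) : Prop :=
  ∀ α : Fin n → ℝ, (∀ j, 0 < α j) →
    Tendsto F (nhdsWithin (rpt n x₀)
      {z | z ∈ tube n (octant n σ) ∧ ∀ j, |(z j).re - x₀ j| < α j * |(z j).im|})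
      (nhds L)

/-- `R` is a rational function on `ℂ^n`: a quotient of two polynomials in `n` variables. -/
def IsRat (n : ℕ) (R : (Fin n → ℂ) → ℂ) : Prop :=
  ∃ P Q : MvPolynomial (Fin n) ℂ, Q ≠ 0 ∧
    ∀ z, MvPolynomial.eval z Q ≠ 0 → R z = MvPolynomial.eval z P / MvPolynomial.eval z Q

/-- `f ∈ H^p_σ(ℝ^n)`: `f` is the a.e. non-tangential boundary limit of some
`H^p(T_{Γ_σ})` function. -/
def HpBdry (n : ℕ) (p : ℝ) (σ : Fin n → Bool) (f : (Fin n → ℝ) → ℂ) : Prop :=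
  ∃ F, MemHp n p (octant n σ) F ∧
    ∀ᵐ x ∂(volume : Measure (Fin n → ℝ)), NTBLAt n σ F x (f x)

/-- The class `𝒜` of rational functions `P(x)/∏ (1+x_j²)^{l_j}` with `deg_j P < 2 l_j`. -/
def memA (n : ℕ) (R : (Fin n → ℝ) → ℂ) : Prop :=
  ∃ (P : MvPolynomial (Fin n) ℂ) (l : Fin n → ℕ),
    (∀ j, P.degreeOf j < 2 * l j) ∧
    ∀ x, R x = MvPolynomial.eval (fun j => (x j : ℂ)) P / ∏ j, (1 + (x j : ℂ) ^ 2) ^ (l j)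

/-!
Map `ℝⁿ` into the compact box `([-1, 1] × [-1, 1])ⁿ` by `t ↦ ((1 + t²)⁻¹, t (1 + t²)⁻¹)` in each
coordinate. Polynomials in the `2n` box coordinates pull back to functions
`P(x) / ∏ⱼ (1 + xⱼ²)^{lⱼ}` with `deg_j P ≤ 2 lⱼ`. For `g` continuous with compact support,
`g(x) ∏ⱼ (1 + xⱼ²)ᵐ` extends continuously to the box, so by Stone–Weierstrass it is uniformly
`δ`-close to such a pullback; dividing by `∏ⱼ (1 + xⱼ²)ᵐ` gives `Q ∈ 𝒜` with
`|Q - g| ≤ δ ∏ⱼ (1 + xⱼ²)⁻ᵐ`, which is small in `Lᵖ` once `m p ≥ 1`. Finally continuous compactly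
supported functions are dense in `Lᵖ`, also for `p < 1` thanks to the quasi-triangle inequality.
-/

lemma ENNReal.exists_pos_ofReal_mul_lt {a b : ℝ≥0∞} (ha : a ≠ ∞) (hb : b ≠ 0) :
    ∃ δ : ℝ, 0 < δ ∧ ENNReal.ofReal δ * a < b := by
  obtain ⟨c, hc0, hc⟩ := ENNReal.exists_pos_mul_lt ha hb
  have hc1 : min c 1 ≠ ∞ := ne_top_of_le_ne_top ENNReal.one_ne_top (min_le_right _ _)
  refine ⟨(min c 1).toReal, ENNReal.toReal_pos (by positivity) hc1, ?_⟩
  rw [ENNReal.ofReal_toReal hc1]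
  exact lt_of_le_of_lt (by gcongr; exact min_le_left _ _) hc

namespace MeasureTheory

variable {α E : Type*} [TopologicalSpace α] [MeasurableSpace α] [BorelSpace α]
  [NormalSpace α] [R1Space α] [WeaklyLocallyCompactSpace α] {μ : Measure α} [μ.Regular]
  [NormedAddCommGroup E] [NormedSpace ℝ E] {p : ℝ≥0∞}

theorem MemLp.exists_eLpNorm_sub_lt_of_approx_continuous (hp : p ≠ ∞) (S : (α → E) → Prop)
    (hS : ∀ g : α → E, Continuous g → HasCompactSupport g → ∀ η : ℝ≥0∞, η ≠ 0 →
      ∃ Q, S Q ∧ AEStronglyMeasurable Q μ ∧ eLpNorm (Q - g) p μ ≤ η)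
    {f : α → E} (hf : MemLp f p μ) {ε : ℝ≥0∞} (hε : ε ≠ 0) :
    ∃ Q, S Q ∧ eLpNorm (Q - f) p μ < ε := by
  obtain ⟨η, hη, hadd⟩ := exists_Lp_half E μ p hε
  obtain ⟨g, hgs, hfg, hgc, hg⟩ := hf.exists_hasCompactSupport_eLpNorm_sub_le hp hη.ne'
  obtain ⟨Q, hSQ, hQm, hQg⟩ := hS g hgc hgs η hη.ne'
  refine ⟨Q, hSQ, ?_⟩
  have := hadd _ _ (hQm.sub hg.1) (hg.1.sub hf.1) hQg (by rwa [eLpNorm_sub_comm])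
  rwa [sub_add_sub_cancel] at this

end MeasureTheory

namespace ContinuousMap

variable {X : Type*} [TopologicalSpace X] [CompactSpace X]

theorem exists_re_im_mem_subalgebra_near (A : Subalgebra ℝ C(X, ℝ)) (hA : A.SeparatesPoints)
    (F : C(X, ℂ)) {δ : ℝ} (hδ : 0 < δ) :
    ∃ a ∈ A, ∃ b ∈ A, ∀ x, ‖(a x : ℂ) + b x * Complex.I - F x‖ < δ := by
  obtain ⟨⟨a, haA⟩, ha⟩ := exists_mem_subalgebra_near_continuous_of_separatesPoints A hA
    (fun x => (F x).re) (by fun_prop) (δ / 2) (by positivity)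
  obtain ⟨⟨b, hbA⟩, hb⟩ := exists_mem_subalgebra_near_continuous_of_separatesPoints A hA
    (fun x => (F x).im) (by fun_prop) (δ / 2) (by positivity)
  refine ⟨a, haA, b, hbA, fun x => ?_⟩
  calc ‖(a x : ℂ) + b x * Complex.I - F x‖
      ≤ |(a x : ℝ) - (F x).re| + |(b x : ℝ) - (F x).im| := by
        refine (Complex.norm_le_abs_re_add_abs_im _).trans_eq ?_
        simp
    _ < δ / 2 + δ / 2 := add_lt_add (ha x) (hb x)
    _ = δ := add_halves δ

end ContinuousMap

lemma lpNorm_eq_eLpNorm_rpow {n : ℕ} {p : ℝ} (hp : 0 < p) (f : (Fin n → ℝ) → ℂ) :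
    lpNorm n p f = eLpNorm f (ENNReal.ofReal p) volume ^ p := by
  rw [eLpNorm_eq_lintegral_rpow_enorm_toReal (by simpa using hp) ENNReal.ofReal_ne_top,
    ENNReal.toReal_ofReal hp.le, ← ENNReal.rpow_mul, one_div, inv_mul_cancel₀ hp.ne',
    ENNReal.rpow_one]
  rfl

lemma MemLp'.memLp {n : ℕ} {p : ℝ} (hp : 0 < p) {f : (Fin n → ℝ) → ℂ} (hf : MemLp' n p f) :
    MemLp f (ENNReal.ofReal p) volume := by
  refine ⟨hf.1.aestronglyMeasurable, ?_⟩
  have h := hf.2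
  rwa [lpNorm_eq_eLpNorm_rpow hp, ENNReal.rpow_lt_top_iff_of_pos hp] at h

namespace RationalDensity

variable {ι : Type*}

lemma memLp_prod_inv_one_add_sq_pow [Fintype ι] {p : ℝ} (hp : 0 < p) {m : ℕ} (hmp : 1 ≤ m * p) :
    MemLp (fun x : ι → ℝ => (∏ j, (1 + x j ^ 2)⁻¹) ^ m) (ENNReal.ofReal p) volume := by
  have hcont : Continuous (fun x : ι → ℝ => ∏ j, (1 + x j ^ 2)⁻¹) := by
    fun_prop (disch := intro x; positivity)
  have hint : Integrable (fun x : ι → ℝ => ∏ j, (1 + x j ^ 2)⁻¹) :=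
    Integrable.fintype_prod (f := fun _ t => (1 + t ^ 2)⁻¹) fun _ => integrable_inv_one_add_sq
  refine (integrable_norm_rpow_iff ((hcont.pow m).aestronglyMeasurable)
    (by simpa using hp) ENNReal.ofReal_ne_top).1 (hint.mono' ?_ (ae_of_all _ fun x => ?_))
  · exact ((hcont.pow m).norm.rpow_const fun _ => Or.inr (by simp)).aestronglyMeasurable
  · set w := ∏ j, (1 + x j ^ 2)⁻¹
    have hw0 : 0 ≤ w := by positivity
    have hw1 : w ≤ 1 := Finset.prod_le_one (fun j _ => by positivity)
      fun j _ => inv_le_one_of_one_le₀ (by nlinarith [sq_nonneg (x j)])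
    rw [Pi.pow_apply, ENNReal.toReal_ofReal hp.le, norm_pow, Real.norm_of_nonneg hw0,
      Real.norm_of_nonneg (by positivity), ← Real.rpow_natCast, ← Real.rpow_mul hw0]
    exact Real.rpow_le_self_of_le_one hw0 hw1 hmp

lemma one_add_ofReal_sq_ne_zero (t : ℝ) : 1 + (t : ℂ) ^ 2 ≠ 0 := by
  exact_mod_cast (by positivity : (0 : ℝ) < 1 + t ^ 2).ne'

open MvPolynomial

lemma degreeOf_one_add_X_sq_le [DecidableEq ι] (i j : ι) :
    degreeOf i (1 + X j ^ 2 : MvPolynomial ι ℂ) ≤ if j = i then 2 else 0 := by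
  refine (degreeOf_add_le _ _ _).trans (max_le (by simp [degreeOf_one]) ?_)
  split_ifs with h
  · simp [h]
  · simp [degreeOf_X_pow_of_ne _ (Ne.symm h)]

section Weighted

variable [Fintype ι]

def weightPoly (l : ι → ℕ) : MvPolynomial ι ℂ := ∏ j, (1 + X j ^ 2) ^ l j

lemma degreeOf_weightPoly_le (l : ι → ℕ) (i : ι) : degreeOf i (weightPoly l) ≤ 2 * l i := by
  classical
  calc degreeOf i (weightPoly l)
      ≤ ∑ j, l j * degreeOf i (1 + X j ^ 2 : MvPolynomial ι ℂ) :=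
        (degreeOf_prod_le _ _ _).trans (Finset.sum_le_sum fun j _ => degreeOf_pow_le _ _ _)
    _ ≤ ∑ j, l j * if j = i then 2 else 0 :=
        Finset.sum_le_sum fun j _ => Nat.mul_le_mul_left _ (degreeOf_one_add_X_sq_le i j)
    _ = 2 * l i := by simp [mul_comm]

lemma eval_weightPoly (l : ι → ℕ) (x : ι → ℝ) :
    eval (fun j => (x j : ℂ)) (weightPoly l) = ∏ j, (1 + (x j : ℂ) ^ 2) ^ l j := by
  simp [weightPoly]

lemma prod_one_add_ofReal_sq_pow_ne_zero (l : ι → ℕ) (x : ι → ℝ) :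
    ∏ j, (1 + (x j : ℂ) ^ 2) ^ l j ≠ 0 :=
  Finset.prod_ne_zero_iff.2 fun _ _ => pow_ne_zero _ (one_add_ofReal_sq_ne_zero _)

/-- Unlike `memA`, this class is closed under products and contains the constants: it holds the
pullbacks along `toBox` of all polynomials in the box coordinates. -/
def memAle (R : (ι → ℝ) → ℂ) : Prop :=
  ∃ (P : MvPolynomial ι ℂ) (l : ι → ℕ), (∀ j, P.degreeOf j ≤ 2 * l j) ∧
    ∀ x, R x = eval (fun j => (x j : ℂ)) P / ∏ j, (1 + (x j : ℂ) ^ 2) ^ l j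

lemma memAle_const (c : ℂ) : memAle (fun _ : ι → ℝ => c) :=
  ⟨C c, 0, fun _ => by simp, fun x => by simp⟩

lemma memAle.add {R S : (ι → ℝ) → ℂ} (hR : memAle R) (hS : memAle S) :
    memAle (fun x => R x + S x) := by
  obtain ⟨P, l, hP, hR⟩ := hR
  obtain ⟨Q, k, hQ, hS⟩ := hS
  refine ⟨P * weightPoly k + Q * weightPoly l, l + k, fun j => ?_, fun x => ?_⟩
  · have := degreeOf_weightPoly_le k j
    have := degreeOf_weightPoly_le l j
    have := degreeOf_mul_le j P (weightPoly k)
    have := degreeOf_mul_le j Q (weightPoly l)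
    have := degreeOf_add_le j (P * weightPoly k) (Q * weightPoly l)
    have := hP j
    have := hQ j
    simp only [Pi.add_apply]
    omega
  · simp only [hR, hS, map_add, map_mul, eval_weightPoly, Pi.add_apply, pow_add,
      Finset.prod_mul_distrib]
    rw [div_add_div _ _ (prod_one_add_ofReal_sq_pow_ne_zero l x)
      (prod_one_add_ofReal_sq_pow_ne_zero k x)]
    ring

lemma memAle.mul {R S : (ι → ℝ) → ℂ} (hR : memAle R) (hS : memAle S) :
    memAle (fun x => R x * S x) := by
  obtain ⟨P, l, hP, hR⟩ := hR
  obtain ⟨Q, k, hQ, hS⟩ := hS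
  refine ⟨P * Q, l + k, fun j => ?_, fun x => ?_⟩
  · have := degreeOf_mul_le j P Q
    have := hP j
    have := hQ j
    simp only [Pi.add_apply]
    omega
  · simp only [hR, hS, map_mul, Pi.add_apply, pow_add, Finset.prod_mul_distrib,
      div_mul_div_comm]

lemma memAle_pow_div_one_add_sq (j : ι) {k : ℕ} (hk : k ≤ 2) :
    memAle (fun x : ι → ℝ => (x j : ℂ) ^ k / (1 + (x j : ℂ) ^ 2)) := by
  classical
  refine ⟨X j ^ k, Pi.single j 1, fun i => ?_, fun x => ?_⟩
  · rcases eq_or_ne i j with rfl | hij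
    · simpa using hk
    · simp [degreeOf_X_pow_of_ne _ hij]
  · rw [Fintype.prod_eq_single j fun i hij => by simp [hij]]
    simp

lemma memAle.div_pow_prod {n m : ℕ} (hm : 1 ≤ m) {R : (Fin n → ℝ) → ℂ} (hR : memAle R) :
    memA n (fun x => R x / ∏ j, (1 + (x j : ℂ) ^ 2) ^ m) := by
  obtain ⟨P, l, hP, hR⟩ := hR
  refine ⟨P, l + fun _ => m, fun j => ?_, fun x => ?_⟩
  · have := hP j
    simp only [Pi.add_apply]
    omega
  · simp only [hR, Pi.add_apply, pow_add, Finset.prod_mul_distrib, div_div]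

end Weighted

lemma inv_one_add_sq_mem_Icc (t : ℝ) : (1 + t ^ 2)⁻¹ ∈ Set.Icc (-1 : ℝ) 1 :=
  ⟨by linarith [inv_pos.2 (by positivity : (0 : ℝ) < 1 + t ^ 2)],
    inv_le_one_of_one_le₀ (by nlinarith [sq_nonneg t])⟩

lemma mul_inv_one_add_sq_mem_Icc (t : ℝ) : t * (1 + t ^ 2)⁻¹ ∈ Set.Icc (-1 : ℝ) 1 := by
  have h : (0 : ℝ) < 1 + t ^ 2 := by positivity
  rw [Set.mem_Icc, ← abs_le, abs_mul, abs_inv, abs_of_pos h, ← div_eq_mul_inv, div_le_one h]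
  nlinarith [sq_abs t, sq_nonneg (|t| - 1)]

abbrev Box (ι : Type*) := ι → Set.Icc (-1 : ℝ) 1 × Set.Icc (-1 : ℝ) 1

/-- `t ↦ ((1 + t²)⁻¹, t (1 + t²)⁻¹)` parametrizes the circle `u² + v² = u` minus the point
`(0, 0)`, which plays the role of `t = ∞`. -/
def toBox (x : ι → ℝ) : Box ι :=
  fun j => (⟨_, inv_one_add_sq_mem_Icc (x j)⟩, ⟨_, mul_inv_one_add_sq_mem_Icc (x j)⟩)

def boxFst (j : ι) : C(Box ι, ℝ) := ⟨fun ζ => (ζ j).1, by fun_prop⟩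

def boxSnd (j : ι) : C(Box ι, ℝ) := ⟨fun ζ => (ζ j).2, by fun_prop⟩

def boxAlg (ι : Type*) : Subalgebra ℝ C(Box ι, ℝ) :=
  Algebra.adjoin ℝ (Set.range boxFst ∪ Set.range boxSnd)

lemma boxAlg_separatesPoints : (boxAlg ι).SeparatesPoints := by
  intro ζ ξ hne
  obtain ⟨j, hj⟩ := Function.ne_iff.1 hne
  by_cases h : (ζ j).1 = (ξ j).1
  · have h2 : ((ζ j).2 : ℝ) ≠ (ξ j).2 := fun h2 => hj (Prod.ext h (Subtype.ext h2))
    exact ⟨_, ⟨boxSnd j, Algebra.subset_adjoin (Or.inr ⟨j, rfl⟩), rfl⟩, h2⟩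
  · exact ⟨_, ⟨boxFst j, Algebra.subset_adjoin (Or.inl ⟨j, rfl⟩), rfl⟩,
      fun h1 => h (Subtype.ext h1)⟩

lemma memAle_comp_toBox [Fintype ι] {a : C(Box ι, ℝ)} (ha : a ∈ boxAlg ι) :
    memAle (fun x => (a (toBox x) : ℂ)) := by
  induction ha using Algebra.adjoin_induction with
  | mem a ha =>
    rcases ha with ⟨j, rfl⟩ | ⟨j, rfl⟩
    · convert memAle_pow_div_one_add_sq j (k := 0) (by norm_num) using 2 with x
      simp [boxFst, toBox]
    · convert memAle_pow_div_one_add_sq j (k := 1) (by norm_num) using 2 with x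
      simp [boxSnd, toBox, div_eq_mul_inv]
  | algebraMap r => exact memAle_const (r : ℂ)
  | add a b _ _ ha hb => simpa using ha.add hb
  | mul a b _ _ ha hb => simpa using ha.mul hb

def cutoff (γ u : ℝ) : ℝ := min 1 (max 0 (u / γ - 1))

lemma cutoff_of_le {γ u : ℝ} (hγ : 0 < γ) (hu : u ≤ γ) : cutoff γ u = 0 := by
  have : u / γ ≤ 1 := (div_le_one hγ).2 hu
  simp [cutoff, show u / γ - 1 ≤ 0 by linarith]

lemma cutoff_of_two_mul_le {γ u : ℝ} (hγ : 0 < γ) (hu : 2 * γ ≤ u) : cutoff γ u = 1 := by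
  have : 2 ≤ u / γ := (le_div_iff₀ hγ).2 (by linarith)
  simp [cutoff, show 1 ≤ u / γ - 1 by linarith]

/-- The extension of `g(x) ∏ⱼ (1 + xⱼ²)ᵐ` to the box (`lift_toBox`): dividing the second box
coordinate by the first recovers `xⱼ`, and the `max` with `γ` and the cutoff keep this continuous
at the points with vanishing first coordinate, which do not come from `ℝⁿ`. -/
def lift [Fintype ι] (g : (ι → ℝ) → ℂ) (m : ℕ) (γ : ℝ) (ζ : Box ι) : ℂ :=
  ((∏ j, cutoff γ (ζ j).1 * (max ((ζ j).1 : ℝ) γ)⁻¹ ^ m : ℝ) : ℂ) *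
    g (fun j => (ζ j).2 * (max ((ζ j).1 : ℝ) γ)⁻¹)

lemma continuous_lift [Fintype ι] {g : (ι → ℝ) → ℂ} (hg : Continuous g) (m : ℕ) {γ : ℝ}
    (hγ : 0 < γ) : Continuous (lift g m γ) := by
  unfold lift cutoff
  fun_prop (disch := intro; exact (hγ.trans_le (le_max_right _ _)).ne')

lemma lift_toBox [Fintype ι] {g : (ι → ℝ) → ℂ} (m : ℕ) {γ : ℝ} (hγ : 0 < γ)
    (hg : ∀ x, g x ≠ 0 → ∀ j, 2 * γ ≤ (1 + x j ^ 2)⁻¹) (x : ι → ℝ) :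
    lift g m γ (toBox x) = (∏ j, (1 + (x j : ℂ) ^ 2) ^ m) * g x := by
  set u : ι → ℝ := fun j => (1 + x j ^ 2)⁻¹
  have hu : ∀ j, 0 < u j := fun j => by positivity
  have hy : ∀ j, γ ≤ u j → x j * u j * (max (u j) γ)⁻¹ = x j := fun j h => by
    rw [max_eq_left h, mul_inv_cancel_right₀ (hu j).ne']
  change ((∏ j, cutoff γ (u j) * (max (u j) γ)⁻¹ ^ m : ℝ) : ℂ) *
    g (fun j => x j * u j * (max (u j) γ)⁻¹) = _
  by_cases hin : ∀ j, 2 * γ ≤ u j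
  · have hle : ∀ j, γ ≤ u j := fun j => by linarith [hin j]
    have hfac : ∀ j, cutoff γ (u j) * (max (u j) γ)⁻¹ ^ m = (1 + x j ^ 2) ^ m := fun j => by
      rw [cutoff_of_two_mul_le hγ (hin j), max_eq_left (hle j), one_mul, inv_inv]
    simp only [hfac, hy _ (hle _)]
    push_cast
    rfl
  · obtain ⟨j, hj⟩ : ∃ j, u j < 2 * γ := by simpa using hin
    have hgx : g x = 0 := by_contra fun h => (hj.trans_le (hg x h j)).false
    rw [hgx, mul_zero]
    rcases le_or_gt (u j) γ with hjγ | hjγ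
    · rw [Finset.prod_eq_zero (Finset.mem_univ j) (by rw [cutoff_of_le hγ hjγ, zero_mul]),
        Complex.ofReal_zero, zero_mul]
    · refine mul_eq_zero_of_right _ (by_contra fun h => ?_)
      have := hg _ h j
      rw [hy j hjγ.le] at this
      exact (hj.trans_le this).false

lemma _root_.HasCompactSupport.exists_two_mul_le_inv_one_add_sq [Fintype ι] {g : (ι → ℝ) → ℂ}
    (hg : HasCompactSupport g) :
    ∃ γ > 0, ∀ x, g x ≠ 0 → ∀ j, 2 * γ ≤ (1 + x j ^ 2)⁻¹ := by
  obtain ⟨R, hR⟩ := hg.isBounded.subset_closedBall 0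
  refine ⟨(2 * (1 + R ^ 2))⁻¹, by positivity, fun x hx j => ?_⟩
  have hxR : |x j| ≤ R := (norm_le_pi_norm x j).trans
    (mem_closedBall_zero_iff.1 (hR (subset_tsupport g hx)))
  rw [mul_inv, ← mul_assoc, mul_inv_cancel₀ two_ne_zero, one_mul]
  exact inv_anti₀ (by positivity) (by nlinarith [sq_abs (x j), abs_nonneg (x j)])

lemma _root_.memA.continuous {n : ℕ} {Q : (Fin n → ℝ) → ℂ} (hQ : memA n Q) : Continuous Q := by
  obtain ⟨P, l, -, hQ⟩ := hQ
  rw [funext hQ]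
  exact ((MvPolynomial.continuous_eval P).comp (by fun_prop)).div (by fun_prop)
    (prod_one_add_ofReal_sq_pow_ne_zero l)

lemma norm_prod_one_add_ofReal_sq_pow [Fintype ι] (m : ℕ) (x : ι → ℝ) :
    ‖∏ j, (1 + (x j : ℂ) ^ 2) ^ m‖ = ((∏ j, (1 + x j ^ 2)⁻¹) ^ m)⁻¹ := by
  rw [Finset.prod_inv_distrib, inv_pow, inv_inv, ← Finset.prod_pow, norm_prod]
  refine Finset.prod_congr rfl fun j _ => ?_
  rw [norm_pow, show 1 + (x j : ℂ) ^ 2 = ((1 + x j ^ 2 : ℝ) : ℂ) by push_cast; rfl,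
    Complex.norm_of_nonneg (by positivity)]

end RationalDensity

open RationalDensity

lemma exists_memA_norm_sub_le {n m : ℕ} (hm : 1 ≤ m) {g : (Fin n → ℝ) → ℂ} (hg : Continuous g)
    (hgs : HasCompactSupport g) {δ : ℝ} (hδ : 0 < δ) :
    ∃ Q, memA n Q ∧ ∀ x, ‖Q x - g x‖ ≤ δ * (∏ j, (1 + x j ^ 2)⁻¹) ^ m := by
  obtain ⟨γ, hγ, hsupp⟩ := hgs.exists_two_mul_le_inv_one_add_sq
  obtain ⟨a, ha, b, hb, hab⟩ := ContinuousMap.exists_re_im_mem_subalgebra_near (boxAlg _)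
    boxAlg_separatesPoints ⟨lift g m γ, continuous_lift hg m hγ⟩ hδ
  refine ⟨fun x => ((a (toBox x) : ℂ) + b (toBox x) * Complex.I) / ∏ j, (1 + (x j : ℂ) ^ 2) ^ m,
    ((memAle_comp_toBox ha).add ((memAle_comp_toBox hb).mul (memAle_const _))).div_pow_prod hm,
    fun x => ?_⟩
  have hW := prod_one_add_ofReal_sq_pow_ne_zero (fun _ => m) x
  calc _ = ‖(a (toBox x) : ℂ) + b (toBox x) * Complex.I - lift g m γ (toBox x)‖ /
        ‖∏ j, (1 + (x j : ℂ) ^ 2) ^ m‖ := by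
        rw [lift_toBox m hγ hsupp, ← norm_div, sub_div, mul_div_cancel_left₀ _ hW]
    _ ≤ δ / ‖∏ j, (1 + (x j : ℂ) ^ 2) ^ m‖ := by gcongr; exact (hab _).le
    _ = δ * (∏ j, (1 + x j ^ 2)⁻¹) ^ m := by
        rw [norm_prod_one_add_ofReal_sq_pow, div_inv_eq_mul]

lemma exists_memA_eLpNorm_sub_le {n : ℕ} {p : ℝ} (hp : 0 < p) {g : (Fin n → ℝ) → ℂ}
    (hg : Continuous g) (hgs : HasCompactSupport g) {η : ℝ≥0∞} (hη : η ≠ 0) :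
    ∃ Q, memA n Q ∧ AEStronglyMeasurable Q volume ∧
      eLpNorm (Q - g) (ENNReal.ofReal p) volume ≤ η := by
  obtain ⟨N, hN⟩ := exists_nat_ge p⁻¹
  have hmp : 1 ≤ ((N + 1 : ℕ) : ℝ) * p := by
    rw [← inv_mul_cancel₀ hp.ne']
    push_cast
    gcongr
    linarith
  set w := fun x : Fin n → ℝ => (∏ j, (1 + x j ^ 2)⁻¹) ^ (N + 1)
  have hw : MemLp w (ENNReal.ofReal p) volume := memLp_prod_inv_one_add_sq_pow hp hmp
  obtain ⟨δ, hδ, hδη⟩ := ENNReal.exists_pos_ofReal_mul_lt hw.2.ne hη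
  obtain ⟨Q, hQ, hQg⟩ := exists_memA_norm_sub_le (Nat.le_add_left 1 N) hg hgs hδ
  refine ⟨Q, hQ, hQ.continuous.aestronglyMeasurable, ?_⟩
  calc eLpNorm (Q - g) (ENNReal.ofReal p) volume
      ≤ eLpNorm (δ • w) (ENNReal.ofReal p) volume := eLpNorm_mono_real hQg
    _ = ENNReal.ofReal δ * eLpNorm w (ENNReal.ofReal p) volume := by
        rw [eLpNorm_const_smul, Real.enorm_eq_ofReal hδ.le]
    _ ≤ η := hδη.le

/-- For `0<p<∞`, the class `𝒜` is dense in `L^p(ℝ^n)`: for every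
`f ∈ L^p(ℝ^n)` and `ε > 0` there is `Q ∈ 𝒜` with `∫_{ℝ^n}|Q-f|^p dx < ε`. -/
theorem statement7 (n : ℕ) (p : ℝ) (hp : 0 < p)
    (f : (Fin n → ℝ) → ℂ) (hf : MemLp' n p f) (ε : ℝ) (hε : 0 < ε) :
    ∃ Q : (Fin n → ℝ) → ℂ, memA n Q ∧
      lpNorm n p (fun x => Q x - f x) < ENNReal.ofReal ε := by
  have hε' : ENNReal.ofReal ε ^ p⁻¹ ≠ 0 := by
    simp [ENNReal.rpow_eq_zero_iff, hε, hp]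
  obtain ⟨Q, hQ, hQf⟩ := (hf.memLp hp).exists_eLpNorm_sub_lt_of_approx_continuous
    ENNReal.ofReal_ne_top (memA n) (fun _ hg hgs _ => exists_memA_eLpNorm_sub_le hp hg hgs) hε'
  refine ⟨Q, hQ, ?_⟩
  rw [lpNorm_eq_eLpNorm_rpow hp]
  calc eLpNorm (Q - f) (ENNReal.ofReal p) volume ^ p < (ENNReal.ofReal ε ^ p⁻¹) ^ p :=
        ENNReal.rpow_lt_rpow hQf hp
    _ = ENNReal.ofReal ε := by rw [← ENNReal.rpow_mul, inv_mul_cancel₀ hp.ne', ENNReal.rpow_one]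
end
end

section
/- The class 𝒜 is dense in C₀(ℝ^n) with respect to the supremum norm: for every continuous function g : ℝ^n → ℂ vanishing at infinity and every ε > 0 there exists R ∈ 𝒜 with sup_{x∈ℝ^n} |R(x) − g(x)| < ε. -/
open MeasureTheory Complex Filter
open scoped ENNReal NNReal Topology

noncomputable section

/-! Stone–Weierstrass on the one-point compactification `ℝⁿ ∪ {∞}`. Since `𝒜` is closed under
sums (pass to a common denominator), products and complex conjugation, the continuous `F` with
`F|ℝⁿ - F(∞) ∈ 𝒜` form a unital star subalgebra of `C(ℝⁿ ∪ {∞}, ℂ)`. It separates points: with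
`w = ∏ⱼ (1 + xⱼ²)⁻¹`, the functions `w` and `xⱼ w` lie in `𝒜`, vanish at infinity, and together
determine the point. So it is dense; if `F` approximates the extension of `g` by `0` within `ε / 2`,
then `R = F - F(∞)` approximates `g` within `ε`. -/

open MvPolynomial

variable {n : ℕ}

lemma MvPolynomial.degreeOf_map_le {R S σ : Type*} [CommSemiring R] [CommSemiring S]
    (f : R →+* S) (j : σ) (p : MvPolynomial σ R) : degreeOf j (map f p) ≤ degreeOf j p := by
  simp only [degreeOf_eq_sup]
  exact Finset.sup_mono (support_map_subset f p)

def memADenom (l : Fin n → ℕ) : MvPolynomial (Fin n) ℂ := ∏ k, (1 + X k ^ 2) ^ l k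

lemma degreeOf_memADenom_le (l : Fin n → ℕ) (j : Fin n) :
    degreeOf j (memADenom l) ≤ 2 * l j := by
  classical
  have hfactor (k : Fin n) : degreeOf j ((1 + X k ^ 2 : MvPolynomial (Fin n) ℂ) ^ l k) ≤
      if j = k then 2 * l j else 0 := by
    refine (degreeOf_pow_le _ _ _).trans ?_
    have hsq : degreeOf j (1 + X k ^ 2 : MvPolynomial (Fin n) ℂ) ≤ if j = k then 2 else 0 := by
      refine (degreeOf_add_le _ _ _).trans (max_le (by simp) ((degreeOf_pow_le _ _ _).trans ?_))
      rw [degreeOf_X]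
      split_ifs <;> simp
    split_ifs at hsq ⊢ with h
    · subst h; nlinarith
    · simp_all
  calc degreeOf j (memADenom l)
      ≤ ∑ k, degreeOf j ((1 + X k ^ 2 : MvPolynomial (Fin n) ℂ) ^ l k) := degreeOf_prod_le _ _ _
    _ ≤ ∑ k, if j = k then 2 * l j else 0 := Finset.sum_le_sum fun k _ => hfactor k
    _ = 2 * l j := by simp

lemma eval_memADenom (l : Fin n → ℕ) (x : Fin n → ℝ) :
    eval (fun j => (x j : ℂ)) (memADenom l) = ∏ k, (1 + (x k : ℂ) ^ 2) ^ l k := by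
  simp [memADenom]

lemma prod_one_add_sq_ne_zero (l : Fin n → ℕ) (x : Fin n → ℝ) :
    ∏ k, (1 + (x k : ℂ) ^ 2) ^ l k ≠ 0 :=
  Finset.prod_ne_zero_iff.mpr fun k _ =>
    pow_ne_zero _ <| by exact_mod_cast (by positivity : (1 + x k ^ 2 : ℝ) ≠ 0)

/-- `memA n R` unfolds to `∃ P l, MemARepr R P l`. -/
def MemARepr (R : (Fin n → ℝ) → ℂ) (P : MvPolynomial (Fin n) ℂ) (l : Fin n → ℕ) : Prop :=
  (∀ j, P.degreeOf j < 2 * l j) ∧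
    ∀ x, R x = eval (fun j => (x j : ℂ)) P / ∏ j, (1 + (x j : ℂ) ^ 2) ^ l j

namespace MemARepr

variable {R S : (Fin n → ℝ) → ℂ} {P Q : MvPolynomial (Fin n) ℂ} {l l' : Fin n → ℕ}

lemma mono (h : MemARepr R P l) (hl : l ≤ l') : MemARepr R (P * memADenom (l' - l)) l' := by
  refine ⟨fun j => (degreeOf_mul_le _ _ _).trans_lt ?_, fun x => ?_⟩
  · have := h.1 j; have := degreeOf_memADenom_le (l' - l) j; have := hl j
    simp only [Pi.sub_apply] at *
    omega
  · rw [h.2 x, map_mul, eval_memADenom,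
      ← mul_div_mul_right _ _ (prod_one_add_sq_ne_zero (l' - l) x), ← Finset.prod_mul_distrib]
    congr 2 with k
    rw [← pow_add, Pi.sub_apply, Nat.add_sub_cancel' (hl k)]

lemma add (hR : MemARepr R P l) (hS : MemARepr S Q l) : MemARepr (R + S) (P + Q) l :=
  ⟨fun j => (degreeOf_add_le _ _ _).trans_lt (max_lt (hR.1 j) (hS.1 j)),
    fun x => by rw [Pi.add_apply, hR.2 x, hS.2 x, map_add, add_div]⟩

end MemARepr

variable {R S : (Fin n → ℝ) → ℂ}

lemma memA_zero : memA n 0 :=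
  ⟨0, 1, fun j => by simp, fun x => by simp⟩

lemma memA_add (hR : memA n R) (hS : memA n S) : memA n (R + S) := by
  obtain ⟨P, l, hP⟩ := hR
  obtain ⟨Q, m, hQ⟩ := hS
  exact ⟨_, _, (MemARepr.mono hP le_sup_left).add (MemARepr.mono hQ le_sup_right)⟩

lemma memA_mul (hR : memA n R) (hS : memA n S) : memA n (R * S) := by
  obtain ⟨P, l, hPdeg, hP⟩ := hR
  obtain ⟨Q, m, hQdeg, hQ⟩ := hS
  refine ⟨P * Q, l + m, fun j => (degreeOf_mul_le _ _ _).trans_lt ?_, fun x => ?_⟩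
  · have := hPdeg j; have := hQdeg j
    simp only [Pi.add_apply]
    omega
  · simp only [Pi.mul_apply, Pi.add_apply, hP x, hQ x, map_mul, div_mul_div_comm, pow_add,
      Finset.prod_mul_distrib]

lemma memA_const_mul (c : ℂ) (hR : memA n R) : memA n (fun x => c * R x) := by
  obtain ⟨P, l, hPdeg, hP⟩ := hR
  exact ⟨C c * P, l, fun j => (degreeOf_C_mul_le _ _ _).trans_lt (hPdeg j),
    fun x => show c * R x = _ by rw [hP x, map_mul, eval_C, mul_div_assoc]⟩

lemma memA_star (hR : memA n R) : memA n (star R) := by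
  obtain ⟨P, l, hPdeg, hP⟩ := hR
  refine ⟨map (starRingEnd ℂ) P, l, fun j => (degreeOf_map_le _ _ _).trans_lt (hPdeg j),
    fun x => ?_⟩
  have hconj : starRingEnd ℂ (eval (fun j => (x j : ℂ)) P) =
      eval₂ (starRingEnd ℂ) (fun j => (x j : ℂ)) P := by
    rw [eval, coe_eval₂Hom, eval₂_comp_left]
    simp [Function.comp_def]
  simp [hP x, eval_map, hconj]

def weight (x : Fin n → ℝ) : ℝ := (∏ j, (1 + x j ^ 2))⁻¹

lemma weight_pos (x : Fin n → ℝ) : 0 < weight x :=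
  inv_pos.mpr (Finset.prod_pos fun j _ => by positivity)

lemma continuous_weight : Continuous (weight (n := n)) :=
  (continuous_finsetProd _ fun j _ => by fun_prop).inv₀ fun x => (inv_pos.mp (weight_pos x)).ne'

lemma memA_weight : memA n (fun x => (weight x : ℂ)) :=
  ⟨1, 1, fun j => by simp, fun x => by simp [weight]⟩

lemma memA_coord_mul_weight (i : Fin n) : memA n (fun x => (x i * weight x : ℂ)) := by
  classical
  refine ⟨X i, 1, fun j => ?_, fun x => by simp [weight, div_eq_mul_inv]⟩
  rw [degreeOf_X]
  split_ifs <;> simp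

lemma one_add_norm_sq_le_prod (x : Fin n → ℝ) : 1 + ‖x‖ ^ 2 ≤ ∏ j, (1 + x j ^ 2) := by
  classical
  have hone (s : Finset (Fin n)) : 1 ≤ ∏ k ∈ s, (1 + x k ^ 2) :=
    Finset.one_le_prod fun k _ => le_add_of_nonneg_right (sq_nonneg _)
  have hfactor (j : Fin n) : 1 + x j ^ 2 ≤ ∏ k, (1 + x k ^ 2) := by
    rw [← Finset.mul_prod_erase _ _ (Finset.mem_univ j)]
    exact le_mul_of_one_le_right (by positivity) (hone _)
  have hnorm : ‖x‖ ≤ √(∏ k, (1 + x k ^ 2) - 1) :=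
    (pi_norm_le_iff_of_nonneg (Real.sqrt_nonneg _)).mpr fun j =>
      Real.abs_le_sqrt (by linarith [hfactor j])
  have := Real.sq_sqrt (by linarith [hone Finset.univ] : (0:ℝ) ≤ ∏ k, (1 + x k ^ 2) - 1)
  nlinarith [norm_nonneg x]

lemma weight_le (x : Fin n → ℝ) : weight x ≤ (1 + ‖x‖ ^ 2)⁻¹ :=
  inv_anti₀ (by positivity) (one_add_norm_sq_le_prod x)

lemma tendsto_inv_one_add_sq_atTop : Tendsto (fun t : ℝ => (1 + t ^ 2)⁻¹) atTop (𝓝 0) :=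
  (tendsto_atTop_add_const_left _ 1 (tendsto_pow_atTop two_ne_zero)).inv_tendsto_atTop

lemma tendsto_mul_inv_one_add_sq_atTop : Tendsto (fun t : ℝ => t * (1 + t ^ 2)⁻¹) atTop (𝓝 0) := by
  refine squeeze_zero' ((eventually_ge_atTop 0).mono fun t ht => by positivity)
    ((eventually_gt_atTop 0).mono fun t ht => ?_) tendsto_inv_atTop_zero
  rw [← div_eq_mul_inv, div_le_iff₀ (by positivity), inv_mul_eq_div, le_div_iff₀ ht]
  nlinarith

lemma tendsto_weight_cocompact : Tendsto (weight (n := n)) (cocompact _) (𝓝 0) :=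
  squeeze_zero (fun x => (weight_pos x).le) weight_le
    (tendsto_inv_one_add_sq_atTop.comp tendsto_norm_cocompact_atTop)

lemma tendsto_coord_mul_weight_cocompact (i : Fin n) :
    Tendsto (fun x : Fin n → ℝ => x i * weight x) (cocompact _) (𝓝 0) := by
  refine squeeze_zero_norm (fun x => ?_)
    (tendsto_mul_inv_one_add_sq_atTop.comp tendsto_norm_cocompact_atTop)
  rw [norm_mul, Real.norm_of_nonneg (weight_pos x).le]
  exact mul_le_mul (norm_le_pi_norm x i) (weight_le x) (weight_pos x).le (norm_nonneg x)

open OnePoint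

def memAStarSubalgebra (n : ℕ) : StarSubalgebra ℂ C(OnePoint (Fin n → ℝ), ℂ) where
  carrier := {F | memA n fun x => F x - F ∞}
  add_mem' {F G} hF hG := by
    show memA n _
    convert memA_add hF hG using 1
    ext x
    simp only [ContinuousMap.add_apply, Pi.add_apply]
    ring
  mul_mem' {F G} hF hG := by
    show memA n _
    -- `FG - F(∞)G(∞) = (F - F(∞))(G - G(∞)) + F(∞)(G - G(∞)) + G(∞)(F - F(∞))`
    convert memA_add (memA_add (memA_mul hF hG) (memA_const_mul (F ∞) hG))
      (memA_const_mul (G ∞) hF) using 1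
    ext x
    simp only [ContinuousMap.mul_apply, Pi.add_apply, Pi.mul_apply]
    ring
  algebraMap_mem' c := by
    show memA n _
    convert (memA_zero : memA n 0) using 1
    ext x
    simp
  star_mem' {F} hF := by
    show memA n _
    convert memA_star hF using 1
    ext x
    simp

lemma continuousMapMk_mem_memAStarSubalgebra {f : C(Fin n → ℝ, ℂ)} (hf : memA n f)
    (h0 : Tendsto f (coclosedCompact _) (𝓝 0)) :
    continuousMapMk f 0 h0 ∈ memAStarSubalgebra n := by
  show memA n fun x => f x - 0
  simpa using hf

lemma injective_elim_weight_coord_mul_weight :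
    Function.Injective fun p : OnePoint (Fin n → ℝ) =>
      (p.elim 0 weight, fun i => p.elim 0 fun x => x i * weight x) := by
  intro p q hpq
  induction p using OnePoint.rec <;> induction q using OnePoint.rec
  · rfl
  · exact absurd (congrArg Prod.fst hpq) (weight_pos _).ne
  · exact absurd (congrArg Prod.fst hpq) (weight_pos _).ne'
  · rename_i x y
    simp only [OnePoint.elim_some, Prod.mk.injEq, funext_iff] at hpq
    obtain ⟨hw, hcoord⟩ := hpq
    rw [← hw] at hcoord
    exact congrArg _ (funext fun i => mul_right_cancel₀ (weight_pos x).ne' (hcoord i))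

lemma exists_mem_memAStarSubalgebra_of_real {f : (Fin n → ℝ) → ℝ} (hc : Continuous f)
    (h0 : Tendsto f (cocompact _) (𝓝 0)) (hf : memA n fun x => (f x : ℂ)) :
    ∃ F ∈ memAStarSubalgebra n, ∀ p, F p = ((p.elim 0 f : ℝ) : ℂ) := by
  have h0' : Tendsto (fun x => (f x : ℂ)) (coclosedCompact _) (𝓝 0) := by
    simpa [coclosedCompact_eq_cocompact] using h0.ofReal
  refine ⟨continuousMapMk ⟨_, Complex.continuous_ofReal.comp hc⟩ 0 h0',
    continuousMapMk_mem_memAStarSubalgebra hf h0', fun p => ?_⟩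
  induction p using OnePoint.rec <;> rfl

lemma memAStarSubalgebra_separatesPoints : (memAStarSubalgebra n).SeparatesPoints := by
  intro p q hpq
  obtain ⟨W, hW, hWval⟩ := exists_mem_memAStarSubalgebra_of_real (n := n)
    continuous_weight tendsto_weight_cocompact memA_weight
  have hne := injective_elim_weight_coord_mul_weight.ne hpq
  rw [Ne, Prod.ext_iff, not_and_or] at hne
  rcases hne with hne | hne
  · exact ⟨W, ⟨W, hW, rfl⟩, by simpa [hWval] using hne⟩
  · obtain ⟨i, hi⟩ := Function.ne_iff.mp hne
    obtain ⟨R, hR, hRval⟩ := exists_mem_memAStarSubalgebra_of_real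
      (f := fun x => x i * weight x) ((continuous_apply i).mul continuous_weight)
      (tendsto_coord_mul_weight_cocompact i) (by exact_mod_cast memA_coord_mul_weight i)
    exact ⟨R, ⟨R, hR, rfl⟩, by simpa [hRval] using hi⟩

/-- The class `𝒜` is dense in `C₀(ℝ^n)` for the supremum norm. -/
theorem statement8 (n : ℕ) (g : (Fin n → ℝ) → ℂ) (hgc : Continuous g)
    (hg0 : Tendsto g (cocompact (Fin n → ℝ)) (nhds 0)) (ε : ℝ) (hε : 0 < ε) :
    ∃ R : (Fin n → ℝ) → ℂ, memA n R ∧ ∀ x, ‖R x - g x‖ < ε := by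
  let G : C(OnePoint (Fin n → ℝ), ℂ) :=
    continuousMapMk ⟨g, hgc⟩ 0 (by rwa [coclosedCompact_eq_cocompact])
  have hdense := ContinuousMap.starSubalgebra_topologicalClosure_eq_top_of_separatesPoints _
    (memAStarSubalgebra_separatesPoints (n := n))
  have hG : G ∈ closure (memAStarSubalgebra n : Set C(OnePoint (Fin n → ℝ), ℂ)) := by
    rw [← StarSubalgebra.topologicalClosure_coe, hdense]
    trivial
  obtain ⟨F, hF, hFG⟩ := Metric.mem_closure_iff.mp hG (ε / 2) (half_pos hε)
  refine ⟨fun x => F x - F ∞, hF, fun x => ?_⟩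
  calc ‖F x - F ∞ - g x‖ = ‖(F x - G x) - (F ∞ - G ∞)‖ := by
        simp [G, continuousMapMk, sub_right_comm]
    _ ≤ dist F G + dist F G := by
        refine (norm_sub_le _ _).trans (add_le_add ?_ ?_) <;>
          exact (dist_eq_norm _ _).symm.trans_le (ContinuousMap.dist_apply_le_dist _)
    _ < ε := by rw [dist_comm] at hFG; linarith

end
end

section
/- Let 0 < p < 1. Let m and l_1,…,l_n be nonnegative integers with l = max{l_1,…,l_n} and (m−l)p > 1; for each k = 1,…,n let a_{k1},…,a_{km} be pairwise distinct real numbers; let P(x_1,…,x_n) = ∑_{s_1=0}^{l_1}⋯∑_{s_n=0}^{l_n} a_{s_1⋯s_n} x_1^{s_1}⋯x_n^{s_n} be a polynomial with complex coefficients; and define f(x) = P(x)/∏_{k=1}^n ∏_{j=1}^m (x_k − a_{kj}) for x ∈ ℝ^n off the poles. Then f ∈ L^p(ℝ^n), and for every sign vector σ ∈ {+1,−1}^n the rational function R(z) = P(z)/∏_{k=1}^n ∏_{j=1}^m (z_k − a_{kj}) is holomorphic on T_{Γ_σ}, belongs to H^p(T_{Γ_σ}), and has non-tangential boundary limit f(x)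 at almost every x ∈ ℝ^n; hence f ∈ ⋂_{σ∈{±1}^n} H^p_σ(ℝ^n), and in particular ⋂_{σ} H^p_σ(ℝ^n) contains nonzero functions. -/
open MeasureTheory Complex Filter
open scoped ENNReal NNReal Topology

noncomputable section

/-!
Since `deg_k P ≤ l`, `|R(z)|^p` is dominated by `∏_k g_k(z_k)^p` with
`g_k(w) = (1 + |w|)^l / ∏_j |w - a_{kj}|`, so by Fubini it suffices to bound `∫ g_k(u + it)^p du`
uniformly in `t`. If `a_{ki}` is the pole nearest to `w` and `r = |w - a_{ki}|`, the other poles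
are at distance `≳ max(1, r)` from `w`, whence `g_k(w) ≲ min(r⁻¹, r^{l-m})`. As
`r ≥ |Re w - a_{ki}|`, `g_k(w)^p` is thus bounded, uniformly in `Im w`, by a function of `Re w`
that is integrable because `p < 1 < (m - l)p`. Holomorphy and the non-tangential limits are
immediate: `R` is continuous off the real poles, which the octant tubes avoid and which form a
null set of `ℝ^n`.
-/

open Set

theorem MvPolynomial.norm_eval_le_of_degreeOf_le {σ 𝕜 : Type*} [Fintype σ] [NormedField 𝕜]
    {P : MvPolynomial σ 𝕜} {N : ℕ} (hP : ∀ i, P.degreeOf i ≤ N) (z : σ → 𝕜) :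
    ‖eval z P‖ ≤ (∑ d ∈ P.support, ‖P.coeff d‖) * ∏ i, (1 + ‖z i‖) ^ N := by
  rw [eval_eq', Finset.sum_mul]
  refine (norm_sum_le _ _).trans (Finset.sum_le_sum fun d hd => ?_)
  rw [norm_mul, norm_prod]
  gcongr with i
  have h1 : 1 ≤ 1 + ‖z i‖ := le_add_of_nonneg_right (norm_nonneg _)
  calc ‖z i ^ d i‖ = ‖z i‖ ^ d i := norm_pow _ _
    _ ≤ (1 + ‖z i‖) ^ d i := by gcongr; linarith
    _ ≤ (1 + ‖z i‖) ^ N := pow_le_pow_right₀ h1 ((monomial_le_degreeOf i hd).trans (hP i))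

theorem MvPolynomial.differentiable_eval {σ : Type*} [Fintype σ] (P : MvPolynomial σ ℂ) :
    Differentiable ℂ fun z : σ → ℂ => eval z P := fun z =>
  (AnalyticOnNhd.eval_mvPolynomial P z (mem_univ z)).differentiableAt

theorem exists_two_mul_le_norm_sub_of_injective {ι E : Type*} [Finite ι] [NormedAddCommGroup E]
    {c : ι → E} (hc : Function.Injective c) :
    ∃ ε > 0, ε ≤ 1 ∧ ∀ i j, i ≠ j → 2 * ε ≤ ‖c i - c j‖ := by
  have hsep : ∀ i j, ∀ᶠ ε in 𝓝 (0 : ℝ), i ≠ j → 2 * ε ≤ ‖c i - c j‖ := fun i j => by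
    have hlim : Tendsto (fun ε : ℝ => 2 * ε) (𝓝 0) (𝓝 0) := by
      simpa using (continuous_const_mul (2 : ℝ)).tendsto 0
    by_cases hij : i = j
    · simp [hij]
    · filter_upwards [hlim.eventually (eventually_le_nhds
        (norm_pos_iff.2 (sub_ne_zero.2 (hc.ne hij))))] with ε hε _ using hε
  have hsmall : ∀ᶠ ε in 𝓝[>] (0 : ℝ), ε ≤ 1 ∧ ∀ i j, i ≠ j → 2 * ε ≤ ‖c i - c j‖ :=
    nhdsWithin_le_nhds ((eventually_le_nhds one_pos).and
      (eventually_all.2 fun i => eventually_all.2 (hsep i)))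
  obtain ⟨ε, ⟨h1, hgap⟩, hε⟩ := (hsmall.and self_mem_nhdsWithin).exists
  exact ⟨ε, hε, h1, fun i j => hgap i j⟩

theorem mul_max_pow_le_prod_norm_sub {ι E : Type*} [Fintype ι] [NormedAddCommGroup E]
    {c : ι → E} {ε : ℝ} (hgap : ∀ i j, i ≠ j → 2 * ε ≤ ‖c i - c j‖) {w : E} {i : ι}
    (hi : ∀ j, ‖w - c i‖ ≤ ‖w - c j‖) :
    ‖w - c i‖ * max ε ‖w - c i‖ ^ (Fintype.card ι - 1) ≤ ∏ j, ‖w - c j‖ := by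
  classical
  have hfar : ∀ j ≠ i, max ε ‖w - c i‖ ≤ ‖w - c j‖ := fun j hj => by
    have htri : ‖c j - c i‖ ≤ ‖w - c j‖ + ‖w - c i‖ := by
      simpa [sub_sub_sub_cancel_left, add_comm] using norm_sub_le (w - c i) (w - c j)
    exact max_le (by linarith [hgap j i hj, hi j]) (hi j)
  rw [← Finset.mul_prod_erase _ _ (Finset.mem_univ i)]
  gcongr
  calc max ε ‖w - c i‖ ^ (Fintype.card ι - 1)
        = ∏ _j ∈ Finset.univ.erase i, max ε ‖w - c i‖ := by simp [Finset.card_erase_of_mem]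
    _ ≤ _ := Finset.prod_le_prod (fun _ _ => le_max_of_le_right (norm_nonneg _))
        fun j hj => hfar j (Finset.ne_of_mem_erase hj)

theorem pow_mul_max_pow_le_mul_max_pow {ε r : ℝ} (hε0 : 0 ≤ ε) (hε1 : ε ≤ 1) (hr : 0 ≤ r)
    {M : ℕ} (hM : 0 < M) : ε ^ (M - 1) * max r (r ^ M) ≤ r * max ε r ^ (M - 1) := by
  rw [mul_max_of_nonneg _ _ (by positivity)]
  refine max_le ?_ ?_
  · rw [mul_comm]
    gcongr
    exact le_max_left ε r
  · calc ε ^ (M - 1) * r ^ M ≤ 1 * (r * r ^ (M - 1)) := by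
          rw [← pow_succ', Nat.sub_add_cancel hM]
          gcongr
          exact pow_le_one₀ hε0 hε1
      _ ≤ r * max ε r ^ (M - 1) := by
          rw [one_mul]
          gcongr
          exact le_max_right ε r

theorem exists_one_add_norm_pow_div_prod_le {ι E : Type*} [Fintype ι] [NormedAddCommGroup E]
    {c : ι → E} (hc : Function.Injective c) {N : ℕ} (hN : N < Fintype.card ι) :
    ∃ K ≥ 0, ∀ w, ∃ i, (1 + ‖w‖) ^ N / ∏ j, ‖w - c j‖
      ≤ K * (max ‖w - c i‖ (‖w - c i‖ ^ (Fintype.card ι - N)))⁻¹ := by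
  obtain ⟨ε, hε0, hε1, hgap⟩ := exists_two_mul_le_norm_sub_of_injective hc
  set M := Fintype.card ι - N
  set B := ∑ j, ‖c j‖
  have hB : 0 ≤ B := Finset.sum_nonneg fun j _ => norm_nonneg (c j)
  set K₀ := (1 + B) / ε + 1
  refine ⟨K₀ ^ N / ε ^ (M - 1), by positivity, fun w => ?_⟩
  have : Nonempty ι := Fintype.card_pos_iff.1 (by omega)
  obtain ⟨i, -, hi⟩ := Finset.univ.exists_min_image (fun j => ‖w - c j‖) Finset.univ_nonempty
  refine ⟨i, ?_⟩
  set r := ‖w - c i‖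
  rcases (norm_nonneg (w - c i)).eq_or_lt with hr | hr
  · rw [Finset.prod_eq_zero (Finset.mem_univ i) hr.symm, div_zero]
    positivity
  set ρ := max ε r
  have hρ : 0 < ρ := lt_max_of_lt_left hε0
  have hnum : 1 + ‖w‖ ≤ K₀ * ρ := by
    have hw : ‖w‖ ≤ r + B := by
      have := norm_le_norm_sub_add w (c i)
      linarith [Finset.single_le_sum (fun j _ => norm_nonneg (c j)) (Finset.mem_univ i)]
    have hB' : 1 + B ≤ (1 + B) / ε * ρ := by
      rw [div_mul_eq_mul_div, le_div_iff₀ hε0]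
      exact mul_le_mul_of_nonneg_left (le_max_left ε r) (by linarith)
    have : r ≤ ρ := le_max_right ε r
    simp only [K₀]
    linarith
  calc (1 + ‖w‖) ^ N / ∏ j, ‖w - c j‖ ≤ (K₀ * ρ) ^ N / (r * ρ ^ (Fintype.card ι - 1)) := by
        gcongr
        exact mul_max_pow_le_prod_norm_sub hgap fun j => hi j (Finset.mem_univ j)
    _ = K₀ ^ N / (r * ρ ^ (M - 1)) := by
        rw [show Fintype.card ι - 1 = N + (M - 1) by omega, pow_add, mul_pow]
        field_simp
    _ ≤ K₀ ^ N / (ε ^ (M - 1) * max r (r ^ M)) :=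
        div_le_div_of_nonneg_left (by positivity) (by positivity)
          (pow_mul_max_pow_le_mul_max_pow hε0.le hε1 hr.le (Nat.sub_pos_of_lt hN))
    _ = _ := by rw [div_mul_eq_div_div, div_eq_mul_inv]

theorem integrable_inv_max_abs_abs_pow_rpow {M : ℕ} {p : ℝ} (hp0 : 0 < p) (hp1 : p < 1)
    (hMp : 1 < M * p) : Integrable fun u : ℝ => (max |u| (|u| ^ M))⁻¹ ^ p := by
  set φ : ℝ → ℝ := fun y => (max y (y ^ M))⁻¹ ^ p
  have hφm : Measurable φ := by fun_prop
  have hφ0 : ∀ y, 0 ≤ y → 0 ≤ φ y := fun y hy => by positivity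
  have hnear : IntegrableOn φ (Ioo 0 1) := by
    refine Integrable.mono'
      ((intervalIntegral.integrableOn_Ioo_rpow_iff one_pos).2 (by linarith : -1 < -p))
      hφm.aestronglyMeasurable ((ae_restrict_iff' measurableSet_Ioo).2 (ae_of_all _ fun y hy => ?_))
    rw [Real.norm_of_nonneg (hφ0 y hy.1.le), Real.rpow_neg hy.1.le, ← Real.inv_rpow hy.1.le]
    show (max y (y ^ M))⁻¹ ^ p ≤ _
    gcongr
    · exact inv_nonneg.2 (le_max_of_le_left hy.1.le)
    · exact hy.1
    · exact le_max_left _ _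
  have hfar : IntegrableOn φ (Ici 1) := by
    rw [integrableOn_Ici_iff_integrableOn_Ioi]
    refine Integrable.mono' (integrableOn_Ioi_rpow_of_lt (by linarith : -(M * p) < -1) one_pos)
      hφm.aestronglyMeasurable ((ae_restrict_iff' measurableSet_Ioi).2 (ae_of_all _ fun y hy => ?_))
    have hy0 : 0 ≤ y := zero_le_one.trans hy.le
    rw [Real.norm_of_nonneg (hφ0 y hy0), Real.rpow_neg hy0, Real.rpow_mul hy0, Real.rpow_natCast,
      ← Real.inv_rpow (by positivity)]
    show (max y (y ^ M))⁻¹ ^ p ≤ _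
    gcongr
    · exact pow_pos (zero_lt_one.trans hy) M
    · exact le_max_right _ _
  have hpos : IntegrableOn φ (Ioi 0) := (hnear.union hfar).mono_set fun y (hy : 0 < y) => by
    rcases lt_or_ge y 1 with h | h
    exacts [Or.inl ⟨hy, h⟩, Or.inr h]
  have := (integrable_fun_norm_addHaar (volume : Measure ℝ) (f := φ)).2 (by simpa using hpos)
  simpa [φ, Real.norm_eq_abs] using this

theorem exists_integral_one_add_norm_pow_div_prod_rpow_le {ι : Type*} [Fintype ι] {c : ι → ℝ}
    (hc : Function.Injective c) {N : ℕ} {p : ℝ} (hp0 : 0 < p) (hp1 : p < 1)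
    (hNp : 1 < ((Fintype.card ι : ℝ) - N) * p) :
    ∃ K, ∀ t : ℝ,
      Integrable (fun u : ℝ => ((1 + ‖(u : ℂ) + t * I‖) ^ N / ∏ j, ‖(u : ℂ) + t * I - c j‖) ^ p) ∧
      ∫ u : ℝ, ((1 + ‖(u : ℂ) + t * I‖) ^ N / ∏ j, ‖(u : ℂ) + t * I - c j‖) ^ p ≤ K := by
  have hN : N < Fintype.card ι := by
    have : (N : ℝ) < Fintype.card ι := by nlinarith
    exact_mod_cast this
  set M := Fintype.card ι - N
  have hMp : 1 < (M : ℝ) * p := by rwa [Nat.cast_sub hN.le]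
  obtain ⟨K, hK0, hK⟩ := exists_one_add_norm_pow_div_prod_le (ofReal_injective.comp hc) hN
  set φ : ℝ → ℝ := fun u => (max |u| (|u| ^ M))⁻¹ ^ p
  set g : ℝ → ℝ := fun u => K ^ p * ∑ j, φ (u - c j)
  have hg : Integrable g := (integrable_finsetSum _ fun j _ =>
    (integrable_inv_max_abs_abs_pow_rpow hp0 hp1 hMp).comp_sub_right (c j)).const_mul _
  refine ⟨∫ u, g u, fun t => ?_⟩
  set h : ℝ → ℝ := fun u => ((1 + ‖(u : ℂ) + t * I‖) ^ N / ∏ j, ‖(u : ℂ) + t * I - c j‖) ^ p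
  have hh0 : ∀ u, 0 ≤ h u := fun u => by positivity
  have hhg : ∀ᵐ u, h u ≤ g u := by
    filter_upwards [eventually_all.2 fun j => Measure.ae_ne volume (c j)] with u hu
    obtain ⟨i, hi⟩ := hK ((u : ℂ) + t * I)
    have hre : |u - c i| ≤ ‖(u : ℂ) + t * I - c i‖ := by
      simpa using abs_re_le_norm ((u : ℂ) + t * I - c i)
    have hpos : 0 < |u - c i| := abs_pos.2 (sub_ne_zero.2 (hu i))
    calc h u ≤ (K * (max ‖(u : ℂ) + t * I - c i‖ (‖(u : ℂ) + t * I - c i‖ ^ M))⁻¹) ^ p := by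
          simp only [h, Function.comp_apply] at hi ⊢
          gcongr
      _ ≤ (K * (max |u - c i| (|u - c i| ^ M))⁻¹) ^ p := by gcongr
      _ = K ^ p * φ (u - c i) := Real.mul_rpow hK0 (by positivity)
      _ ≤ g u := mul_le_mul_of_nonneg_left
          (Finset.single_le_sum (f := fun j => φ (u - c j)) (fun j _ => by positivity)
            (Finset.mem_univ i)) (by positivity)
  have hhm : AEStronglyMeasurable h := by fun_prop
  exact ⟨hg.mono' hhm (hhg.mono fun u hu => by rwa [Real.norm_of_nonneg (hh0 u)]),
    integral_mono_of_nonneg (ae_of_all _ hh0) hg hhg⟩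

/-- Equal to `0` at the poles (division by zero). -/
def rationalAtom {ι κ : Type*} [Fintype ι] [Fintype κ] (P : MvPolynomial ι ℂ) (a : ι → κ → ℝ)
    (z : ι → ℂ) : ℂ :=
  MvPolynomial.eval z P / ∏ k, ∏ j, (z k - a k j)

theorem differentiableAt_rationalAtom {ι κ : Type*} [Fintype ι] [Fintype κ]
    (P : MvPolynomial ι ℂ) (a : ι → κ → ℝ) {z : ι → ℂ} (hz : ∀ k j, z k ≠ a k j) :
    DifferentiableAt ℂ (rationalAtom P a) z := by
  have hden : ∏ k, ∏ j, (z k - (a k j : ℂ)) ≠ 0 :=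
    Finset.prod_ne_zero_iff.2 fun k _ => Finset.prod_ne_zero_iff.2 fun j _ =>
      sub_ne_zero.2 (hz k j)
  have hdiff : DifferentiableAt ℂ (fun z : ι → ℂ => ∏ k, ∏ j, (z k - (a k j : ℂ))) z := by
    fun_prop
  change DifferentiableAt ℂ (fun z => MvPolynomial.eval z P / ∏ k, ∏ j, (z k - (a k j : ℂ))) z
  simp only [div_eq_mul_inv]
  exact (MvPolynomial.differentiable_eval P z).mul (hdiff.inv hden)

theorem measurable_rationalAtom {ι κ : Type*} [Fintype ι] [Fintype κ]
    (P : MvPolynomial ι ℂ) (a : ι → κ → ℝ) : Measurable (rationalAtom P a) :=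
  (MvPolynomial.differentiable_eval P).continuous.measurable.div (by fun_prop)

theorem norm_rationalAtom_rpow_le {ι κ : Type*} [Fintype ι] [Fintype κ]
    {P : MvPolynomial ι ℂ} {N : ℕ} (hP : ∀ k, P.degreeOf k ≤ N) (a : ι → κ → ℝ) {p : ℝ}
    (hp : 0 ≤ p) (z : ι → ℂ) :
    ‖rationalAtom P a z‖ ^ p ≤
      (∑ d ∈ P.support, ‖P.coeff d‖) ^ p * ∏ k, ((1 + ‖z k‖) ^ N / ∏ j, ‖z k - a k j‖) ^ p := by
  have h : ‖rationalAtom P a z‖ ≤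
      (∑ d ∈ P.support, ‖P.coeff d‖) * ∏ k, ((1 + ‖z k‖) ^ N / ∏ j, ‖z k - a k j‖) := by
    rw [rationalAtom, norm_div, Finset.prod_div_distrib, ← mul_div_assoc]
    simp_rw [norm_prod]
    gcongr
    exact MvPolynomial.norm_eval_le_of_degreeOf_le hP z
  calc _ ≤ _ := Real.rpow_le_rpow (norm_nonneg _) h hp
    _ = _ := by
      rw [Real.mul_rpow (by positivity) (by positivity),
        Real.finsetProd_rpow _ _ fun k _ => by positivity]

theorem exists_lintegral_rationalAtom_le {n : ℕ} {κ : Type*} [Fintype κ] {p : ℝ} (hp0 : 0 < p)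
    (hp1 : p < 1) {P : MvPolynomial (Fin n) ℂ} {N : ℕ} (hP : ∀ k, P.degreeOf k ≤ N)
    {a : Fin n → κ → ℝ} (ha : ∀ k, Function.Injective (a k))
    (hNp : 1 < ((Fintype.card κ : ℝ) - N) * p) :
    ∃ C : ℝ≥0∞, C < ⊤ ∧
      ∀ y, ∫⁻ x, (‖rationalAtom P a (cpt n x y)‖₊ : ℝ≥0∞) ^ p ≤ C := by
  choose K hK using fun k => exists_integral_one_add_norm_pow_div_prod_rpow_le (ha k) hp0 hp1 hNp
  set C₀ := ∑ d ∈ P.support, ‖P.coeff d‖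
  refine ⟨ENNReal.ofReal (C₀ ^ p * ∏ k, K k), ENNReal.ofReal_lt_top, fun y => ?_⟩
  set h : Fin n → ℝ → ℝ := fun k u =>
    ((1 + ‖(u : ℂ) + y k * I‖) ^ N / ∏ j, ‖(u : ℂ) + y k * I - a k j‖) ^ p
  have hh0 : ∀ k u, 0 ≤ h k u := fun k u => by positivity
  have hF : Integrable fun x : Fin n → ℝ => ∏ k, h k (x k) :=
    Integrable.fintype_prod fun k => (hK k (y k)).1
  have hF0 : 0 ≤ᵐ[volume] fun x : Fin n → ℝ => C₀ ^ p * ∏ k, h k (x k) :=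
    ae_of_all _ fun x => mul_nonneg (by positivity) (Finset.prod_nonneg fun k _ => hh0 k (x k))
  calc ∫⁻ x, (‖rationalAtom P a (cpt n x y)‖₊ : ℝ≥0∞) ^ p
      ≤ ∫⁻ x, ENNReal.ofReal (C₀ ^ p * ∏ k, h k (x k)) := lintegral_mono fun x => by
        rw [← enorm_eq_nnnorm, ← ofReal_norm, ENNReal.ofReal_rpow_of_nonneg (norm_nonneg _) hp0.le]
        refine ENNReal.ofReal_le_ofReal ((norm_rationalAtom_rpow_le hP a hp0.le _).trans_eq ?_)
        simp only [cpt, h, C₀]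
    _ = ENNReal.ofReal (∫ x : Fin n → ℝ, C₀ ^ p * ∏ k, h k (x k)) :=
        (ofReal_integral_eq_lintegral_ofReal (hF.const_mul (C₀ ^ p)) hF0).symm
    _ ≤ _ := by
        refine ENNReal.ofReal_le_ofReal ?_
        rw [integral_const_mul, integral_fintype_prod_volume_eq_prod]
        exact mul_le_mul_of_nonneg_left (Finset.prod_le_prod (fun k _ => integral_nonneg (hh0 k))
          fun k _ => (hK k (y k)).2) (by positivity)

theorem ae_forall_ne {ι κ : Type*} [Fintype ι] [Finite κ] (a : ι → κ → ℝ) :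
    ∀ᵐ x : ι → ℝ, ∀ k j, x k ≠ a k j :=
  eventually_all.2 fun k => eventually_all.2 fun j =>
    Measure.ae_eval_ne (fun _ : ι => (volume : Measure ℝ)) k (a k j)

theorem cpt_mem_tube {n : ℕ} {B : Set (Fin n → ℝ)} (x : Fin n → ℝ) {y : Fin n → ℝ}
    (hy : y ∈ B) :
    cpt n x y ∈ tube n B := by
  simpa [tube, cpt] using hy

theorem cpt_zero {n : ℕ} (x : Fin n → ℝ) : cpt n x 0 = rpt n x := by
  ext j
  simp [cpt, rpt]

theorem ne_ofReal_of_mem_tube_octant {n : ℕ} {σ : Fin n → Bool} {z : Fin n → ℂ}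
    (hz : z ∈ tube n (octant n σ)) (k : Fin n) (r : ℝ) : z k ≠ r := fun h => by
  have := hz k
  simp [h] at this

theorem ntblAt_of_eqOn_of_continuousAt {n : ℕ} {σ : Fin n → Bool} {F G : (Fin n → ℂ) → ℂ}
    {x₀ : Fin n → ℝ} (hFG : EqOn F G (tube n (octant n σ))) (hG : ContinuousAt G (rpt n x₀)) :
    NTBLAt n σ F x₀ (G (rpt n x₀)) := fun _ _ =>
  (hG.tendsto.mono_left nhdsWithin_le_nhds).congr'
    (eventually_nhdsWithin_of_forall fun _ hz => (hFG hz.1).symm)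

theorem memLp'_of_ae_eq_rationalAtom {n : ℕ} {κ : Type*} [Fintype κ] {p : ℝ}
    {P : MvPolynomial (Fin n) ℂ} {a : Fin n → κ → ℝ} {f : (Fin n → ℝ) → ℂ}
    (hfG : f =ᵐ[volume] rationalAtom P a ∘ rpt n)
    (hG : ∫⁻ x, (‖rationalAtom P a (cpt n x 0)‖₊ : ℝ≥0∞) ^ p < ⊤) : MemLp' n p f := by
  have hrpt : Continuous (rpt n) :=
    continuous_pi fun j => continuous_ofReal.comp (continuous_apply j)
  refine ⟨((measurable_rationalAtom P a).comp hrpt.measurable).aemeasurable.congr hfG.symm, ?_⟩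
  calc lpNorm n p f = ∫⁻ x, (‖rationalAtom P a (cpt n x 0)‖₊ : ℝ≥0∞) ^ p :=
        lintegral_congr_ae (hfG.mono fun x hx => by simp only [hx, Function.comp_apply, cpt_zero])
    _ < ⊤ := hG

theorem memHp_of_eqOn_rationalAtom {n : ℕ} {κ : Type*} [Fintype κ] {p : ℝ}
    {P : MvPolynomial (Fin n) ℂ} {a : Fin n → κ → ℝ} {σ : Fin n → Bool} {R : (Fin n → ℂ) → ℂ}
    (hRG : EqOn R (rationalAtom P a) (tube n (octant n σ))) {C : ℝ≥0∞} (hC : C < ⊤)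
    (hbound : ∀ y, ∫⁻ x, (‖rationalAtom P a (cpt n x y)‖₊ : ℝ≥0∞) ^ p ≤ C) :
    MemHp n p (octant n σ) R :=
  ⟨fun z hz => ((differentiableAt_rationalAtom P a fun k j =>
      ne_ofReal_of_mem_tube_octant hz k (a k j)).differentiableWithinAt).congr hRG (hRG hz),
    lt_of_le_of_lt (iSup₂_le fun y hy => by
      simpa only [hRG (cpt_mem_tube _ hy)] using hbound y) hC⟩

/-- Rational atoms: if `(m-l)p > 1` with `l = max_k deg_k P`, the
`a_{k1},…,a_{km}` are pairwise distinct reals, and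
`R(z) = P(z)/∏_{k,j}(z_k - a_{kj})`, `f = R|_{ℝ^n}`, then `f ∈ L^p(ℝ^n)` and, for every
sign vector `σ`, `R` is holomorphic on `T_{Γ_σ}`, belongs to `H^p(T_{Γ_σ})`, and has
non-tangential boundary limit `f(x)` at a.e. `x ∈ ℝ^n`; hence
`f ∈ ⋂_σ H^p_σ(ℝ^n)`. -/
theorem statement17 (n : ℕ) (p : ℝ) (hp0 : 0 < p) (hp1 : p < 1)
    (m : ℕ) (l : Fin n → ℕ) (P : MvPolynomial (Fin n) ℂ)
    (hdeg : ∀ k, P.degreeOf k ≤ l k)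
    (hml : 1 < ((m : ℝ) - (Finset.univ.sup l : ℕ)) * p)
    (a : Fin n → Fin m → ℝ) (ha : ∀ k, Function.Injective (a k))
    (R : (Fin n → ℂ) → ℂ)
    (hRdef : ∀ z : Fin n → ℂ, (∀ k j, z k ≠ (a k j : ℂ)) →
      R z = MvPolynomial.eval z P / ∏ k, ∏ j, (z k - (a k j : ℂ)))
    (f : (Fin n → ℝ) → ℂ) (hf : ∀ x, f x = R (rpt n x)) :
    MemLp' n p f ∧
    ∀ σ : Fin n → Bool,
      MemHp n p (octant n σ) R ∧
      (∀ᵐ x ∂(volume : Measure (Fin n → ℝ)), NTBLAt n σ R x (f x)) ∧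
      HpBdry n p σ f := by
  obtain ⟨C, hC, hbound⟩ := exists_lintegral_rationalAtom_le hp0 hp1
    (fun k => (hdeg k).trans (Finset.le_sup (Finset.mem_univ k))) ha (by simpa using hml)
  have hfG : f =ᵐ[volume] rationalAtom P a ∘ rpt n := (ae_forall_ne a).mono fun x hx =>
    (hf x).trans (hRdef _ fun k j h => hx k j (ofReal_injective h))
  refine ⟨memLp'_of_ae_eq_rationalAtom hfG ((hbound 0).trans_lt hC), fun σ => ?_⟩
  have hRG : EqOn R (rationalAtom P a) (tube n (octant n σ)) := fun z hz =>
    hRdef z fun k j => ne_ofReal_of_mem_tube_octant hz k (a k j)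
  have hHp := memHp_of_eqOn_rationalAtom hRG hC hbound
  have hNT : ∀ᵐ x, NTBLAt n σ R x (f x) := by
    filter_upwards [ae_forall_ne a, hfG] with x hx hfx
    rw [hfx]
    exact ntblAt_of_eqOn_of_continuousAt hRG (differentiableAt_rationalAtom P a
      fun k j h => hx k j (ofReal_injective h)).continuousAt
  exact ⟨hHp, hNT, R, hHp, hNT⟩

end
end
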